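/- Let f₀ ∈ F and let φ_ap ∈ C([0,∞),F) be an approximate solution of VP(f₀). Suppose there are constants E, D ∈ [0,∞) such that ‖E(φ_ap)(t)‖ ≤ E e^{−Bt} and ‖φ_ap(t)‖ ≤ D e^{−Bt} for all t ∈ [0,∞), and that 2√(KNE) + 2KND ≤ 1. Then VP(f₀) has a global solution φ : [0,∞) → F and ‖φ(t) − φ_ap(t)‖ ≤ R e^{−Bt} for all t ∈ [0,∞), where R := (1 − 2KND − √((1 − 2KND)² − 4KNE))/(2KN). -/

import Mathlib

/-!
Run the Picard iteration `ψₙ₊₁ = T ψₙ` from `ψ₀ = φ_ap`, where `T` is the right-hand side of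
VP(f₀). Since `‖𝒫(f,f) − 𝒫(g,g)‖₋ ≤ K(‖f‖ + ‖g‖)‖f − g‖` and the smoothing estimate turns a
bound `c e^{−2Bs}` on the integrand into `cN e^{−Bt}`, the weighted distances are majorized by
the scalar iteration `r₀ = 0`, `rₙ₊₁ = E + KN rₙ(2D + rₙ)`: `‖ψₙ − φ_ap‖ ≤ rₙ e^{−Bt}` and
`‖ψₙ₊₁ − ψₙ‖ ≤ (rₙ₊₁ − rₙ) e^{−Bt}`. The condition `2√(KNE) + 2KND ≤ 1` says that
`x ↦ E + KNx(2D + x)` has the real fixed point `R ≥ 0`, so `rₙ` increases to some `L ≤ R`, and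
the `ψₙ` converge uniformly to a solution `φ` with `‖φ − φ_ap‖ ≤ L e^{−Bt}`. No contraction is
needed, which matters in the borderline case `2√(KNE) + 2KND = 1`.
-/

open Set MeasureTheory Filter Topology

theorem smallerRoot_nonneg_and_fixed {a D E R : ℝ} (ha : 0 < a) (hE : 0 ≤ E)
    (hcond : 2 * Real.sqrt (a * E) + 2 * a * D ≤ 1)
    (hR : R = (1 - 2 * a * D - Real.sqrt ((1 - 2 * a * D) ^ 2 - 4 * a * E)) / (2 * a)) :
    0 ≤ R ∧ E + a * R * (2 * D + R) = R := by
  set Δ := (1 - 2 * a * D) ^ 2 - 4 * a * E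
  have hsqrt_aE : 2 * Real.sqrt (a * E) ≤ 1 - 2 * a * D := by linarith
  have hΔ : 0 ≤ Δ := by
    nlinarith [Real.sq_sqrt (by positivity : 0 ≤ a * E), Real.sqrt_nonneg (a * E)]
  have hsqrtΔ : Real.sqrt Δ ≤ 1 - 2 * a * D :=
    Real.sqrt_le_iff.mpr ⟨by linarith [Real.sqrt_nonneg (a * E)], by nlinarith⟩
  have h2aR : 2 * a * R = 1 - 2 * a * D - Real.sqrt Δ := by
    rw [hR]; field_simp
  refine ⟨hR ▸ div_nonneg (by linarith) (by positivity), ?_⟩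
  have hsq : Real.sqrt Δ ^ 2 = Δ := Real.sq_sqrt hΔ
  rw [show Real.sqrt Δ = 1 - 2 * a * D - 2 * a * R by linarith] at hsq
  have hprod : 4 * a * (E + a * R * (2 * D + R) - R) = 0 := by linear_combination hsq
  linarith [(mul_eq_zero.mp hprod).resolve_left (by positivity)]

theorem MonotoneOn.iterate_mem_Icc {α : Type*} [Preorder α] {g : α → α} {x R : α}
    (hg : MonotoneOn g (Icc x R)) (hx : x ≤ g x) (hxR : x ≤ R) (hR : g R = R) (n : ℕ) :
    g^[n] x ∈ Icc x R ∧ g^[n] x ≤ g^[n + 1] x := by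
  induction n with
  | zero => exact ⟨⟨le_rfl, hxR⟩, hx⟩
  | succ n ih =>
    obtain ⟨hmem, hle⟩ := ih
    have hmem' : g^[n + 1] x ∈ Icc x R := ⟨hmem.1.trans hle,
      by rw [Function.iterate_succ_apply']; exact hR ▸ hg hmem ⟨hxR, le_rfl⟩ hmem.2⟩
    refine ⟨hmem', ?_⟩
    simp only [Function.iterate_succ_apply'] at hle hmem' ⊢
    exact hg hmem hmem' hle

theorem exists_monotone_tendsto_of_isFixedPt_quadratic {a D E R : ℝ} (ha : 0 ≤ a) (hD : 0 ≤ D)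
    (hE : 0 ≤ E) (hR0 : 0 ≤ R) (hR : E + a * R * (2 * D + R) = R) :
    ∃ r : ℕ → ℝ, ∃ L ≤ R, r 0 = 0 ∧ (∀ n, r (n + 1) = E + a * r n * (2 * D + r n)) ∧
      Monotone r ∧ Tendsto r atTop (𝓝 L) := by
  set g : ℝ → ℝ := fun x => E + a * x * (2 * D + x)
  have hg : MonotoneOn g (Icc 0 R) := fun x hx y hy hxy => by
    have := mul_nonneg (mul_nonneg ha (sub_nonneg.mpr hxy))
      (by linarith [hx.1, hy.1] : 0 ≤ 2 * D + x + y)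
    linarith [show g y - g x = a * (y - x) * (2 * D + x + y) by ring]
  have hr := hg.iterate_mem_Icc (by simpa [g] using hE) hR0 hR
  have hr_mono : Monotone fun n => g^[n] 0 := monotone_nat_of_le_succ fun n => (hr n).2
  exact ⟨fun n => g^[n] 0, ⨆ n, g^[n] 0, ciSup_le fun n => (hr n).1.2, rfl,
    fun n => Function.iterate_succ_apply' g n 0, hr_mono,
    tendsto_atTop_ciSup hr_mono ⟨R, by rintro _ ⟨n, rfl⟩; exact (hr n).1.2⟩⟩

theorem exists_limit_of_norm_sub_succ_le {α E : Type*} [NormedAddCommGroup E] [CompleteSpace E]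
    {ψ : ℕ → α → E} {r : ℕ → ℝ} {L : ℝ} {w : α → ℝ} {S : Set α}
    (hr : Monotone r) (hrL : Tendsto r atTop (𝓝 L)) (hw : ∀ x ∈ S, 0 ≤ w x)
    (hψ : ∀ n, ∀ x ∈ S, ‖ψ (n + 1) x - ψ n x‖ ≤ (r (n + 1) - r n) * w x) :
    ∃ φ : α → E, ∀ n, ∀ x ∈ S, ‖φ x - ψ n x‖ ≤ (L - r n) * w x := by
  have htel : ∀ n m, n ≤ m → ∀ x ∈ S, ‖ψ m x - ψ n x‖ ≤ (r m - r n) * w x := by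
    intro n m hnm x hx
    induction m, hnm using Nat.le_induction with
    | base => simp
    | succ m _ ih =>
      calc ‖ψ (m + 1) x - ψ n x‖ ≤ ‖ψ (m + 1) x - ψ m x‖ + ‖ψ m x - ψ n x‖ :=
            norm_sub_le_norm_sub_add_norm_sub _ _ _
        _ ≤ (r (m + 1) - r m) * w x + (r m - r n) * w x := add_le_add (hψ m x hx) ih
        _ = (r (m + 1) - r n) * w x := by ring
  have hrle : ∀ n, r n ≤ L := hr.ge_of_tendsto hrL
  have hlim : ∀ x ∈ S, ∃ y, Tendsto (ψ · x) atTop (𝓝 y) := by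
    intro x hx
    refine cauchySeq_tendsto_of_complete
      (cauchySeq_of_le_tendsto_0' (s := (ψ · x)) (fun n => (L - r n) * w x) (fun n m hnm => ?_) ?_)
    · rw [dist_comm, dist_eq_norm]
      exact (htel n m hnm x hx).trans
        (mul_le_mul_of_nonneg_right (sub_le_sub_right (hrle m) _) (hw x hx))
    · simpa using ((tendsto_const_nhds (x := L)).sub hrL).mul_const (w x)
  choose! φ hφ using hlim
  refine ⟨φ, fun n x hx => le_of_tendsto (((hφ x hx).sub tendsto_const_nhds).norm) ?_⟩
  filter_upwards [eventually_ge_atTop n] with m hm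
  exact (htel n m hm x hx).trans
    (mul_le_mul_of_nonneg_right (sub_le_sub_right (hrle m) _) (hw x hx))

theorem tendstoUniformlyOn_of_norm_sub_le {α E : Type*} [NormedAddCommGroup E]
    {ψ : ℕ → α → E} {φ : α → E} {S : Set α} {b : ℕ → ℝ} (hb : Tendsto b atTop (𝓝 0))
    (h : ∀ n, ∀ x ∈ S, ‖φ x - ψ n x‖ ≤ b n) : TendstoUniformlyOn ψ φ atTop S := by
  rw [Metric.tendstoUniformlyOn_iff]
  intro ε hε
  filter_upwards [hb.eventually (gt_mem_nhds hε)] with n hn x hx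
  rw [dist_eq_norm]
  exact (h n x hx).trans_lt hn

theorem continuousOn_Ici_of_lipschitzOn_isCompact {E : Type*} [SeminormedAddCommGroup E]
    {f : ℝ → E} (hf : ∀ C : Set ℝ, IsCompact C → C ⊆ Ici 0 →
      ∃ M : ℝ, ∀ t ∈ C, ∀ t' ∈ C, ‖f t - f t'‖ ≤ M * |t - t'|) :
    ContinuousOn f (Ici 0) := by
  intro t ht
  obtain ⟨M, hM⟩ := hf (Icc 0 (t + 1)) isCompact_Icc Icc_subset_Ici_self
  have hlip : LipschitzOnWith (Real.toNNReal M) f (Icc 0 (t + 1)) :=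
    LipschitzOnWith.of_dist_le' fun x hx y hy => by
      simpa [dist_eq_norm, Real.dist_eq] using hM x hx y hy
  refine (hlip.continuousOn t ⟨ht, by linarith⟩).mono_of_mem_nhdsWithin ?_
  exact mem_of_superset (inter_mem_nhdsWithin _ (Iio_mem_nhds (by linarith : t < t + 1)))
    fun x hx => ⟨hx.1, hx.2.le⟩

theorem intervalIntegrable_of_le_div_rpow {μ : ℝ → ℝ} (hcont : ContinuousOn μ (Ioi 0))
    (hnonneg : ∀ t > 0, 0 ≤ μ t) {σ C δ : ℝ} (hσ : 0 < σ) (hδ : 0 < δ)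
    (hC : ∀ t ∈ Ioo 0 δ, μ t ≤ C / t ^ (1 - σ)) {t : ℝ} (ht : 0 ≤ t) :
    IntervalIntegrable μ volume 0 t := by
  rcases ht.eq_or_lt with rfl | ht
  · exact IntervalIntegrable.refl
  have hnear : IntervalIntegrable μ volume 0 (δ / 2) := by
    have hδ2 : (0 : ℝ) ≤ δ / 2 := by positivity
    refine ((intervalIntegral.intervalIntegrable_rpow' (r := σ - 1) (by linarith)).const_mul
      C).mono_fun' ?_ ?_
    · rw [uIoc_of_le hδ2]
      exact (hcont.mono fun x hx => hx.1).aestronglyMeasurable measurableSet_Ioc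
    · rw [uIoc_of_le hδ2]
      refine ae_restrict_of_forall_mem measurableSet_Ioc fun x hx => ?_
      have := hC x ⟨hx.1, hx.2.trans_lt (by linarith)⟩
      rwa [← neg_sub, Real.rpow_neg hx.1.le, div_eq_mul_inv, inv_inv,
        ← Real.norm_of_nonneg (hnonneg x hx.1)] at this
  have hfar : IntervalIntegrable μ volume (δ / 2) t :=
    (hcont.mono fun x hx => lt_of_lt_of_le (lt_min (by positivity) ht) hx.1).intervalIntegrable
  exact hnear.trans hfar

theorem ContinuousLinearMap.norm_apply_self_sub_apply_self_le {𝕜 E G : Type*}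
    [NontriviallyNormedField 𝕜] [NormedAddCommGroup E] [NormedSpace 𝕜 E]
    [NormedAddCommGroup G] [NormedSpace 𝕜 G] (P : E →L[𝕜] E →L[𝕜] G) {K : ℝ}
    (hP : ∀ f g : E, ‖P f g‖ ≤ K * ‖f‖ * ‖g‖) (x y : E) :
    ‖P x x - P y y‖ ≤ K * (‖x‖ + ‖y‖) * ‖x - y‖ := by
  have hsplit : P x x - P y y = P (x - y) x + P y (x - y) := by
    simp only [map_sub, FunLike.coe_sub, Pi.sub_apply]
    abel
  calc ‖P x x - P y y‖ ≤ ‖P (x - y) x‖ + ‖P y (x - y)‖ := hsplit ▸ norm_add_le _ _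
    _ ≤ K * ‖x - y‖ * ‖x‖ + K * ‖y‖ * ‖x - y‖ := add_le_add (hP _ _) (hP _ _)
    _ = K * (‖x‖ + ‖y‖) * ‖x - y‖ := by ring

theorem norm_le_add_mul_of_norm_sub_le {E : Type*} [SeminormedAddCommGroup E] {x y : E}
    {c D w : ℝ} (hxy : ‖x - y‖ ≤ c * w) (hy : ‖y‖ ≤ D * w) : ‖x‖ ≤ (D + c) * w :=
  (norm_le_norm_add_norm_sub' x y).trans ((add_le_add hy hxy).trans_eq (by ring))

theorem ae_mem_Ioc_imp_of_forall_mem_Ioo {P : ℝ → Prop} {a b : ℝ} (h : ∀ s ∈ Ioo a b, P s) :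
    ∀ᵐ s, s ∈ Ioc a b → P s := by
  filter_upwards [Measure.ae_ne volume b] with s hsb hs
  exact h s ⟨hs.1, hs.2.lt_of_ne hsb⟩

noncomputable def duhamel {F Fm : Type*} [NormedAddCommGroup F] [NormedSpace ℝ F]
    (W : ℝ → Fm → F) (h : ℝ → Fm) (t : ℝ) : F :=
  ∫ s in (0 : ℝ)..t, W (t - s) (h s)

theorem duhamel_eq_intervalIntegral_indicator {F Fm : Type*} [NormedAddCommGroup F]
    [NormedSpace ℝ F] (W : ℝ → Fm → F) (h : ℝ → Fm) {t T : ℝ} (ht : t ∈ Icc 0 T) :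
    duhamel W h t = ∫ τ in (0 : ℝ)..T, {x | x ≤ t}.indicator (fun x => W x (h (t - x))) τ := by
  rw [intervalIntegral.integral_indicator ht, duhamel]
  simpa using intervalIntegral.integral_comp_sub_left (a := 0) (b := t)
    (fun τ => W τ (h (t - τ))) t

section DecayKernel

variable {F Fm : Type*} [NormedAddCommGroup F] [NormedAddCommGroup Fm]

/-- `W τ` plays the role of `e^{τA} : F₋ → F` and `μ` that of `μ₋`. Nothing is assumed at
`τ = 0`, so integrals against `W (t - s)` are only controlled off the endpoint `s = t`. -/
structure IsDecayKernel (W : ℝ → Fm → F) (μ : ℝ → ℝ) (B : ℝ) : Prop where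
  continuousOn : ContinuousOn (fun p : Fm × ℝ => W p.2 p.1) (univ ×ˢ Ioi 0)
  map_sub : ∀ τ > 0, ∀ a b : Fm, W τ (a - b) = W τ a - W τ b
  norm_le : ∀ τ > 0, ∀ f : Fm, ‖W τ f‖ ≤ μ τ * Real.exp (-(B * τ)) * ‖f‖
  weight_nonneg : ∀ τ > 0, 0 ≤ μ τ
  weight_intervalIntegrable : ∀ t ≥ 0, IntervalIntegrable μ volume 0 t

namespace IsDecayKernel

variable {W : ℝ → Fm → F} {μ : ℝ → ℝ} {B : ℝ}

theorem norm_apply_le (hk : IsDecayKernel W μ B) {τ : ℝ} (hτ : 0 < τ) {f : Fm} {M : ℝ}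
    (hf : ‖f‖ ≤ M) : ‖W τ f‖ ≤ μ τ * Real.exp (-(B * τ)) * M :=
  (hk.norm_le τ hτ f).trans <|
    mul_le_mul_of_nonneg_left hf (mul_nonneg (hk.weight_nonneg τ hτ) (Real.exp_pos _).le)

theorem continuousOn_comp {X : Type*} [TopologicalSpace X] (hk : IsDecayKernel W μ B)
    {a : X → ℝ} {b : X → Fm} {s : Set X} (ha : ContinuousOn a s) (hb : ContinuousOn b s)
    (hpos : ∀ x ∈ s, 0 < a x) : ContinuousOn (fun x => W (a x) (b x)) s :=
  hk.continuousOn.comp (hb.prodMk ha) fun x hx => ⟨mem_univ _, hpos x hx⟩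

theorem intervalIntegrable_weight_sub_mul (hk : IsDecayKernel W μ B) {t : ℝ} (ht : 0 ≤ t)
    {g : ℝ → ℝ} (hg : Continuous g) :
    IntervalIntegrable (fun s => μ (t - s) * g s) volume 0 t := by
  have := (hk.weight_intervalIntegrable t ht).comp_sub_left t
  simp only [sub_self, sub_zero] at this
  exact this.symm.mul_continuousOn hg.continuousOn

theorem intervalIntegrable_integrand (hk : IsDecayKernel W μ B) {t : ℝ} (ht : 0 ≤ t)
    {h : ℝ → Fm} (hh : ContinuousOn h (Icc 0 t)) :
    IntervalIntegrable (fun s => W (t - s) (h s)) volume 0 t := by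
  obtain ⟨M, hM⟩ := isCompact_Icc.exists_bound_of_continuousOn hh
  have hdom := hk.intervalIntegrable_weight_sub_mul ht
    (g := fun s => Real.exp (-(B * (t - s))) * M) (by fun_prop)
  refine hdom.mono_fun' ?_ ?_ <;> rw [uIoc_of_le ht]
  · rw [← restrict_Ioo_eq_restrict_Ioc]
    refine ContinuousOn.aestronglyMeasurable ?_ measurableSet_Ioo
    exact hk.continuousOn_comp (by fun_prop) (hh.mono Ioo_subset_Icc_self)
      fun s hs => sub_pos.mpr hs.2
  · refine (ae_restrict_iff' measurableSet_Ioc).mpr (ae_mem_Ioc_imp_of_forall_mem_Ioo ?_)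
    intro s hs
    simpa only [mul_assoc] using hk.norm_apply_le (sub_pos.mpr hs.2) (hM s (Ioo_subset_Icc_self hs))

theorem continuousAt_indicator_integrand (hk : IsDecayKernel W μ B) {h : ℝ → Fm}
    (hh : ContinuousOn h (Ici 0)) {τ t₀ : ℝ} (hτ : 0 < τ) (hτt₀ : τ ≠ t₀) :
    ContinuousAt (fun t => {x | x ≤ t}.indicator (fun x => W x (h (t - x))) τ) t₀ := by
  rcases hτt₀.lt_or_gt with hlt | hgt
  · have hcont : ContinuousOn (fun t => W τ (h (t - τ))) (Ioi τ) :=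
      hk.continuousOn_comp continuousOn_const
        (hh.comp (by fun_prop) fun t ht => mem_Ici.mpr (sub_nonneg.mpr (le_of_lt (mem_Ioi.mp ht))))
        fun _ _ => hτ
    refine (hcont.continuousAt (Ioi_mem_nhds hlt)).congr ?_
    filter_upwards [Ioi_mem_nhds hlt] with t ht
    exact (indicator_of_mem (s := {x | x ≤ t}) (le_of_lt (mem_Ioi.mp ht) : τ ≤ t)
      (fun x => W x (h (t - x)))).symm
  · refine continuousAt_const.congr (f := fun _ => (0 : F)) ?_
    filter_upwards [Iio_mem_nhds hgt] with t ht
    exact (indicator_of_notMem (s := {x | x ≤ t}) (not_le.mpr (mem_Iio.mp ht)) _).symm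

theorem norm_indicator_integrand_le (hk : IsDecayKernel W μ B) {h : ℝ → Fm} {t T M τ : ℝ}
    (hM : ∀ x ∈ Icc 0 T, ‖h x‖ ≤ M) (hM0 : 0 ≤ M) (htT : t ≤ T) (hτ : 0 < τ) :
    ‖{x | x ≤ t}.indicator (fun x => W x (h (t - x))) τ‖ ≤ μ τ * Real.exp (-(B * τ)) * M := by
  by_cases hτt : τ ≤ t
  · rw [indicator_of_mem (s := {x | x ≤ t}) hτt]
    exact hk.norm_apply_le hτ (hM _ ⟨sub_nonneg.mpr hτt, by linarith⟩)
  · rw [indicator_of_notMem (s := {x | x ≤ t}) hτt, norm_zero]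
    exact mul_nonneg (mul_nonneg (hk.weight_nonneg τ hτ) (Real.exp_pos _).le) hM0

variable [NormedSpace ℝ F]

theorem norm_duhamel_le (hk : IsDecayKernel W μ B) {N t : ℝ} (ht : 0 ≤ t)
    (hN : ∫ s in (0 : ℝ)..t, μ (t - s) * Real.exp (-(B * s)) ≤ N) {h : ℝ → Fm} {c : ℝ}
    (hh : ∀ s ∈ Icc 0 t, ‖h s‖ ≤ c * Real.exp (-(B * s)) * Real.exp (-(B * s))) :
    ‖duhamel W h t‖ ≤ c * N * Real.exp (-(B * t)) := by
  have hc : 0 ≤ c := by simpa using (norm_nonneg _).trans (hh 0 ⟨le_rfl, ht⟩)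
  have hexp : ∀ s, Real.exp (-(B * (t - s))) * Real.exp (-(B * s)) = Real.exp (-(B * t)) :=
    fun s => by rw [← Real.exp_add]; ring_nf
  calc ‖duhamel W h t‖
      ≤ ∫ s in (0 : ℝ)..t, μ (t - s) * Real.exp (-(B * s)) * (c * Real.exp (-(B * t))) := by
        refine intervalIntegral.norm_integral_le_of_norm_le ht
          (ae_mem_Ioc_imp_of_forall_mem_Ioo fun s hs => ?_)
          ((hk.intervalIntegrable_weight_sub_mul ht (by fun_prop)).mul_const _)
        refine (hk.norm_apply_le (sub_pos.mpr hs.2) (hh s (Ioo_subset_Icc_self hs))).trans_eq ?_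
        rw [← hexp s]
        ring
    _ = (∫ s in (0 : ℝ)..t, μ (t - s) * Real.exp (-(B * s))) * (c * Real.exp (-(B * t))) :=
        intervalIntegral.integral_mul_const _ _
    _ ≤ N * (c * Real.exp (-(B * t))) := by gcongr
    _ = c * N * Real.exp (-(B * t)) := by ring

theorem duhamel_sub (hk : IsDecayKernel W μ B) {t : ℝ} (ht : 0 ≤ t) {h₁ h₂ : ℝ → Fm}
    (hh₁ : ContinuousOn h₁ (Icc 0 t)) (hh₂ : ContinuousOn h₂ (Icc 0 t)) :
    duhamel W h₁ t - duhamel W h₂ t = duhamel W (h₁ - h₂) t := by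
  rw [duhamel, duhamel, duhamel, ← intervalIntegral.integral_sub
    (hk.intervalIntegrable_integrand ht hh₁) (hk.intervalIntegrable_integrand ht hh₂)]
  refine intervalIntegral.integral_congr_ae ?_
  rw [uIoc_of_le ht]
  exact ae_mem_Ioc_imp_of_forall_mem_Ioo fun s hs => (hk.map_sub _ (sub_pos.mpr hs.2) _ _).symm

theorem continuousOn_duhamel (hk : IsDecayKernel W μ B) {h : ℝ → Fm}
    (hh : ContinuousOn h (Ici 0)) : ContinuousOn (duhamel W h) (Ici 0) := by
  intro t₀ ht₀
  set T := t₀ + 1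
  have hT : 0 ≤ T := by linarith [mem_Ici.mp ht₀]
  have hnear : ∀ᶠ t in 𝓝[Ici 0] t₀, t ∈ Icc 0 T :=
    mem_of_superset (inter_mem_nhdsWithin _ (Iio_mem_nhds (by linarith : t₀ < T)))
      fun t ht => ⟨ht.1, ht.2.le⟩
  obtain ⟨M, hM⟩ := (isCompact_Icc (a := 0) (b := T)).exists_bound_of_continuousOn
    (hh.mono fun x hx => mem_Ici.mpr hx.1)
  have hM0 : 0 ≤ M := (norm_nonneg _).trans (hM 0 ⟨le_rfl, hT⟩)
  -- with the variable upper limit moved into the integrand, dominated convergence applies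
  have hcont : ContinuousWithinAt
      (fun t => ∫ τ in (0 : ℝ)..T, {x | x ≤ t}.indicator (fun x => W x (h (t - x))) τ)
      (Ici 0) t₀ := by
    refine intervalIntegral.continuousWithinAt_of_dominated_interval
      (bound := fun τ => μ τ * Real.exp (-(B * τ)) * M) ?_ ?_ ?_ ?_
    · filter_upwards [hnear] with t ht
      rw [uIoc_of_le hT, aestronglyMeasurable_indicator_iff (s := {x | x ≤ t}) measurableSet_Iic,
        Measure.restrict_restrict (s := {x | x ≤ t}) measurableSet_Iic]
      refine ContinuousOn.aestronglyMeasurable ?_ (measurableSet_Iic.inter measurableSet_Ioc)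
      exact hk.continuousOn_comp continuousOn_id
        (hh.comp (by fun_prop) fun x hx => mem_Ici.mpr (sub_nonneg.mpr hx.1)) fun x hx => hx.2.1
    · filter_upwards [hnear] with t ht
      refine Eventually.of_forall fun τ hτ => ?_
      rw [uIoc_of_le hT] at hτ
      exact hk.norm_indicator_integrand_le hM hM0 ht.2 hτ.1
    · exact ((hk.weight_intervalIntegrable T hT).mul_continuousOn (by fun_prop)).mul_const M
    · filter_upwards [Measure.ae_ne volume t₀] with τ hτ hmem
      rw [uIoc_of_le hT] at hmem
      exact (hk.continuousAt_indicator_integrand hh hmem.1 hτ).continuousWithinAt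
  exact hcont.congr_of_eventuallyEq (hnear.mono fun t ht => duhamel_eq_intervalIntegral_indicator
    W h ht) (duhamel_eq_intervalIntegral_indicator W h ⟨ht₀, by linarith⟩)

end IsDecayKernel

end DecayKernel

section Picard

variable {F Fm : Type*} [NormedAddCommGroup F] [NormedSpace ℝ F]
  [NormedAddCommGroup Fm] [NormedSpace ℝ Fm]

/-- The right-hand side of VP(f₀), with `u t` standing for `e^{tA} f₀`. -/
noncomputable def picardMap (u : ℝ → F) (W : ℝ → Fm → F) (PP : F →L[ℝ] F →L[ℝ] Fm)
    (ξ : ℝ → Fm) (ψ : ℝ → F) (t : ℝ) : F :=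
  u t + duhamel W (fun s => PP (ψ s) (ψ s) + ξ s) t

variable {u : ℝ → F} {W : ℝ → Fm → F} {PP : F →L[ℝ] F →L[ℝ] Fm} {ξ : ℝ → Fm}
  {μ : ℝ → ℝ} {B N K D E : ℝ} {φap : ℝ → F}

theorem continuousOn_picardMap (hk : IsDecayKernel W μ B) (hu : ContinuousOn u (Ici 0))
    (hξ : ContinuousOn ξ (Ici 0)) {ψ : ℝ → F} (hψ : ContinuousOn ψ (Ici 0)) :
    ContinuousOn (picardMap u W PP ξ ψ) (Ici 0) :=
  hu.add (hk.continuousOn_duhamel (((PP.continuous.comp_continuousOn hψ).clm_apply hψ).add hξ))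

theorem norm_picardMap_sub_le (hk : IsDecayKernel W μ B)
    (hN : ∀ t ≥ 0, ∫ s in (0 : ℝ)..t, μ (t - s) * Real.exp (-(B * s)) ≤ N) (hK : 0 ≤ K)
    (hPP : ∀ f g : F, ‖PP f g‖ ≤ K * ‖f‖ * ‖g‖) (hξ : ContinuousOn ξ (Ici 0))
    {ψ χ : ℝ → F} (hψ : ContinuousOn ψ (Ici 0)) (hχ : ContinuousOn χ (Ici 0)) {a b d : ℝ}
    (hψa : ∀ s ≥ 0, ‖ψ s‖ ≤ a * Real.exp (-(B * s)))
    (hχb : ∀ s ≥ 0, ‖χ s‖ ≤ b * Real.exp (-(B * s)))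
    (hd : ∀ s ≥ 0, ‖ψ s - χ s‖ ≤ d * Real.exp (-(B * s))) {t : ℝ} (ht : 0 ≤ t) :
    ‖picardMap u W PP ξ ψ t - picardMap u W PP ξ χ t‖ ≤
      K * (a + b) * d * N * Real.exp (-(B * t)) := by
  have hquad : ∀ ψ : ℝ → F, ContinuousOn ψ (Ici 0) →
      ContinuousOn (fun s => PP (ψ s) (ψ s) + ξ s) (Icc 0 t) := fun ψ hψ =>
    (((PP.continuous.comp_continuousOn hψ).clm_apply hψ).add hξ).mono Icc_subset_Ici_self
  rw [picardMap, picardMap, add_sub_add_left_eq_sub, hk.duhamel_sub ht (hquad ψ hψ) (hquad χ hχ)]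
  refine hk.norm_duhamel_le ht (hN t ht) fun s hs => ?_
  have hs0 : 0 ≤ s := hs.1
  simp only [Pi.sub_apply, add_sub_add_right_eq_sub]
  calc ‖PP (ψ s) (ψ s) - PP (χ s) (χ s)‖ ≤ K * (‖ψ s‖ + ‖χ s‖) * ‖ψ s - χ s‖ :=
        PP.norm_apply_self_sub_apply_self_le hPP _ _
    _ ≤ K * (a * Real.exp (-(B * s)) + b * Real.exp (-(B * s))) * (d * Real.exp (-(B * s))) := by
        have hψs := hψa s hs0
        have hχs := hχb s hs0
        have hds := hd s hs0
        have hsum : 0 ≤ a * Real.exp (-(B * s)) + b * Real.exp (-(B * s)) :=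
          (add_nonneg (norm_nonneg _) (norm_nonneg _)).trans (add_le_add hψs hχs)
        gcongr
    _ = K * (a + b) * d * Real.exp (-(B * s)) * Real.exp (-(B * s)) := by ring

theorem picardMap_iterate_bounds (hk : IsDecayKernel W μ B)
    (hN : ∀ t ≥ 0, ∫ s in (0 : ℝ)..t, μ (t - s) * Real.exp (-(B * s)) ≤ N) (hK : 0 ≤ K)
    (hPP : ∀ f g : F, ‖PP f g‖ ≤ K * ‖f‖ * ‖g‖) (hξ : ContinuousOn ξ (Ici 0))
    (hu : ContinuousOn u (Ici 0)) (hφap : ContinuousOn φap (Ici 0))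
    (hD : ∀ t ≥ 0, ‖φap t‖ ≤ D * Real.exp (-(B * t)))
    (hE : ∀ t ≥ 0, ‖φap t - picardMap u W PP ξ φap t‖ ≤ E * Real.exp (-(B * t)))
    {r : ℕ → ℝ} (hr0 : r 0 = 0) (hr : ∀ n, r (n + 1) = E + K * N * r n * (2 * D + r n))
    (n : ℕ) :
    ContinuousOn ((picardMap u W PP ξ)^[n] φap) (Ici 0) ∧
      (∀ t ≥ 0, ‖(picardMap u W PP ξ)^[n] φap t - φap t‖ ≤ r n * Real.exp (-(B * t))) ∧
      ∀ t ≥ 0, ‖(picardMap u W PP ξ)^[n + 1] φap t - (picardMap u W PP ξ)^[n] φap t‖ ≤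
        (r (n + 1) - r n) * Real.exp (-(B * t)) := by
  set T := picardMap u W PP ξ
  have hnorm : ∀ {χ : ℝ → F} {c : ℝ}, (∀ t ≥ 0, ‖χ t - φap t‖ ≤ c * Real.exp (-(B * t))) →
      ∀ t ≥ 0, ‖χ t‖ ≤ (D + c) * Real.exp (-(B * t)) := fun hχ t ht =>
    norm_le_add_mul_of_norm_sub_le (hχ t ht) (hD t ht)
  induction n with
  | zero =>
    refine ⟨hφap, fun t _ => by simp [hr0], fun t ht => ?_⟩
    rw [norm_sub_rev, hr 0, hr0]
    simpa using hE t ht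
  | succ n ih =>
    obtain ⟨hcont, hbd, hincr⟩ := ih
    simp only [Function.iterate_succ_apply'] at hincr ⊢
    have hcont' : ContinuousOn (T (T^[n] φap)) (Ici 0) := continuousOn_picardMap hk hu hξ hcont
    have hbd' : ∀ t ≥ 0, ‖T (T^[n] φap) t - φap t‖ ≤ r (n + 1) * Real.exp (-(B * t)) := by
      intro t ht
      have hstep : ‖T (T^[n] φap) t - T φap t‖ ≤
          K * (D + r n + D) * r n * N * Real.exp (-(B * t)) :=
        norm_picardMap_sub_le hk hN hK hPP hξ hcont hφap (hnorm hbd) hD hbd ht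
      calc ‖T (T^[n] φap) t - φap t‖
          ≤ ‖T (T^[n] φap) t - T φap t‖ + ‖T φap t - φap t‖ := norm_sub_le_norm_sub_add_norm_sub ..
        _ ≤ K * (D + r n + D) * r n * N * Real.exp (-(B * t)) + E * Real.exp (-(B * t)) :=
            add_le_add hstep (norm_sub_rev (φap t) _ ▸ hE t ht)
        _ = r (n + 1) * Real.exp (-(B * t)) := by rw [hr]; ring
    refine ⟨hcont', hbd', fun t ht => ?_⟩
    calc ‖T (T (T^[n] φap)) t - T (T^[n] φap) t‖
        ≤ K * (D + r (n + 1) + (D + r n)) * (r (n + 1) - r n) * N * Real.exp (-(B * t)) :=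
          norm_picardMap_sub_le hk hN hK hPP hξ hcont' hcont (hnorm hbd') (hnorm hbd) hincr ht
      _ = (r (n + 1 + 1) - r (n + 1)) * Real.exp (-(B * t)) := by
          rw [hr (n + 1)]
          linear_combination Real.exp (-(B * t)) * hr n

theorem exists_fixedPoint_picardMap [CompleteSpace F] (hk : IsDecayKernel W μ B)
    (hN : ∀ t ≥ 0, ∫ s in (0 : ℝ)..t, μ (t - s) * Real.exp (-(B * s)) ≤ N) (hK : 0 ≤ K)
    (hPP : ∀ f g : F, ‖PP f g‖ ≤ K * ‖f‖ * ‖g‖) (hξ : ContinuousOn ξ (Ici 0))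
    (hu : ContinuousOn u (Ici 0)) (hB : 0 ≤ B) (hφap : ContinuousOn φap (Ici 0))
    (hD0 : 0 ≤ D) (hE0 : 0 ≤ E) (hD : ∀ t ≥ 0, ‖φap t‖ ≤ D * Real.exp (-(B * t)))
    (hE : ∀ t ≥ 0, ‖φap t - picardMap u W PP ξ φap t‖ ≤ E * Real.exp (-(B * t)))
    {R : ℝ} (hR0 : 0 ≤ R) (hR : E + K * N * R * (2 * D + R) = R) :
    ∃ φ : ℝ → F, ContinuousOn φ (Ici 0) ∧ (∀ t ≥ 0, φ t = picardMap u W PP ξ φ t) ∧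
      ∀ t ≥ 0, ‖φ t - φap t‖ ≤ R * Real.exp (-(B * t)) := by
  set T := picardMap u W PP ξ
  have hN0 : 0 ≤ N := by simpa using hN 0 le_rfl
  obtain ⟨r, L, hLR, hr0, hr, hr_mono, hrL⟩ :=
    exists_monotone_tendsto_of_isFixedPt_quadratic (mul_nonneg hK hN0) hD0 hE0 hR0 hR
  have hrle : ∀ n, r n ≤ L := hr_mono.ge_of_tendsto hrL
  have hiter := picardMap_iterate_bounds hk hN hK hPP hξ hu hφap hD hE hr0 hr
  obtain ⟨φ, hφ⟩ := exists_limit_of_norm_sub_succ_le (ψ := fun n => T^[n] φap) (S := Ici 0)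
    hr_mono hrL (fun t _ => (Real.exp_pos (-(B * t))).le) fun n t ht => (hiter n).2.2 t ht
  have hLr : Tendsto (fun n => L - r n) atTop (𝓝 0) := by
    simpa using (tendsto_const_nhds (x := L)).sub hrL
  have hφc : ContinuousOn φ (Ici 0) := by
    refine (tendstoUniformlyOn_of_norm_sub_le hLr fun n t ht => (hφ n t ht).trans ?_).continuousOn
      (Frequently.of_forall fun n => (hiter n).1)
    exact mul_le_of_le_one_right (sub_nonneg.mpr (hrle n))
      (Real.exp_le_one_iff.mpr (neg_nonpos.mpr (mul_nonneg hB ht)))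
  have hφap_near : ∀ t ≥ 0, ‖φ t - φap t‖ ≤ L * Real.exp (-(B * t)) := fun t ht => by
    simpa [hr0] using hφ 0 t ht
  refine ⟨φ, hφc, fun t ht => ?_, fun t ht => (hφap_near t ht).trans (by gcongr)⟩
  have hlim : Tendsto (fun n => T^[n] φap t) atTop (𝓝 (φ t)) := by
    refine tendsto_iff_norm_sub_tendsto_zero.mpr (squeeze_zero (fun _ => norm_nonneg _)
      (fun n => norm_sub_rev (φ t) _ ▸ hφ n t ht) ?_)
    simpa using hLr.mul_const (Real.exp (-(B * t)))
  have hlim' : Tendsto (fun n => T^[n + 1] φap t) atTop (𝓝 (T φ t)) := by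
    refine tendsto_iff_norm_sub_tendsto_zero.mpr (squeeze_zero (fun _ => norm_nonneg _)
      (g := fun n => K * (D + r n + (D + L)) * (L - r n) * N * Real.exp (-(B * t)))
      (fun n => ?_) ?_)
    · rw [Function.iterate_succ_apply']
      exact norm_picardMap_sub_le hk hN hK hPP hξ (hiter n).1 hφc
        (fun s hs => norm_le_add_mul_of_norm_sub_le ((hiter n).2.1 s hs) (hD s hs))
        (fun s hs => norm_le_add_mul_of_norm_sub_le (hφap_near s hs) (hD s hs))
        (fun s hs => norm_sub_rev (φ s) _ ▸ hφ n s hs) ht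
    · have := ((tendsto_const_nhds (x := D)).add hrL).add (tendsto_const_nhds (x := D + L))
      simpa using (((this.const_mul K).mul hLr).mul_const N).mul_const (Real.exp (-(B * t)))
  exact tendsto_nhds_unique (hlim.comp (tendsto_add_atTop_nat 1)) hlim'

end Picard

theorem stmt_7_general
    {F Fm : Type*}
    [NormedAddCommGroup F] [NormedSpace ℝ F] [CompleteSpace F]
    [NormedAddCommGroup Fm] [NormedSpace ℝ Fm]
    -- F is a dense subspace of Fm, with continuous inclusion ι
    (ι : F →L[ℝ] Fm) (hι_inj : Function.Injective ι)
    -- the semigroup (e^{tA})_{t ≥ 0} on Fm, strongly continuous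
    (U : ℝ → Fm →L[ℝ] Fm)
    -- e^{tA} maps F into F (lift V), giving a strongly continuous semigroup on F
    (V : ℝ → F → F)
    (hVcont : ContinuousOn (fun p : F × ℝ => V p.2 p.1) (univ ×ˢ Ici (0:ℝ)))
    -- e^{tA} maps Fm into F for t > 0 (lift W), continuously on Fm × (0,∞)
    (W : ℝ → Fm → F)
    (hW : ∀ t > (0:ℝ), ∀ f : Fm, ι (W t f) = U t f)
    (hWcont : ContinuousOn (fun p : Fm × ℝ => W p.2 p.1) (univ ×ˢ Ioi (0:ℝ)))
    -- the continuous bilinear map 𝒫 with constant K, and the forcing ξ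
    (PP : F →L[ℝ] F →L[ℝ] Fm) (K : ℝ) (hK : 0 < K)
    (hPP : ∀ f g : F, ‖PP f g‖ ≤ K * ‖f‖ * ‖g‖)
    (ξ : ℝ → Fm)
    (hξ : ∀ C : Set ℝ, IsCompact C → C ⊆ Ici (0:ℝ) →
      ∃ M : ℝ, ∀ t ∈ C, ∀ t' ∈ C, ‖ξ t - ξ t'‖ ≤ M * |t - t'|)
    -- constants B, N and the exponential semigroup estimators (P4'), (P5')
    (B N : ℝ) (hB : 0 ≤ B) (hN : 0 < N)
    (μm : ℝ → ℝ)
    (hμm_cont : ContinuousOn μm (Ioi (0:ℝ)))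
    (hμm_pos : ∀ t > (0:ℝ), 0 < μm t)
    (hμm_bd : ∀ t > (0:ℝ), ∀ f : Fm, ‖W t f‖ ≤ μm t * Real.exp (-(B * t)) * ‖f‖)
    (σ : ℝ) (hσ : σ ∈ Ioc (0:ℝ) 1)
    (hμm_O : ∃ C : ℝ, ∃ δ > (0:ℝ), ∀ t ∈ Ioo (0:ℝ) δ, μm t ≤ C / t ^ (1 - σ))
    (hμm_N : ∀ t ≥ (0:ℝ), (∫ s in (0:ℝ)..t, μm (t - s) * Real.exp (-(B * s))) ≤ N)
    -- datum and approximate solution on [0,∞)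
    (f₀ : F) (φap : ℝ → F) (hφap_cont : ContinuousOn φap (Ici (0:ℝ)))
    (E D : ℝ) (hE : 0 ≤ E) (hD : 0 ≤ D)
    (hEb : ∀ t ≥ (0:ℝ),
      ‖φap t - V t f₀ - ∫ s in (0:ℝ)..t, W (t - s) (PP (φap s) (φap s) + ξ s)‖ ≤
        E * Real.exp (-(B * t)))
    (hDb : ∀ t ≥ (0:ℝ), ‖φap t‖ ≤ D * Real.exp (-(B * t)))
    (hcond : 2 * Real.sqrt (K * N * E) + 2 * K * N * D ≤ 1)
    (R : ℝ)
    (hR : R = (1 - 2 * K * N * D -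
      Real.sqrt ((1 - 2 * K * N * D) ^ 2 - 4 * K * N * E)) / (2 * K * N)) :
    ∃ φ : ℝ → F, ContinuousOn φ (Ici (0:ℝ)) ∧
      (∀ t ≥ (0:ℝ), φ t = V t f₀ + ∫ s in (0:ℝ)..t, W (t - s) (PP (φ s) (φ s) + ξ s)) ∧
      ∀ t ≥ (0:ℝ), ‖φ t - φap t‖ ≤ R * Real.exp (-(B * t)) := by
  obtain ⟨C, δ, hδ, hC⟩ := hμm_O
  have hk : IsDecayKernel W μm B :=
    { continuousOn := hWcont
      map_sub := fun τ hτ a b => hι_inj (by simp only [map_sub, hW τ hτ])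
      norm_le := hμm_bd
      weight_nonneg := fun τ hτ => (hμm_pos τ hτ).le
      weight_intervalIntegrable := fun t ht => intervalIntegrable_of_le_div_rpow hμm_cont
        (fun τ hτ => (hμm_pos τ hτ).le) hσ.1 hδ hC ht }
  have hu : ContinuousOn (fun t => V t f₀) (Ici 0) :=
    hVcont.comp (continuousOn_const.prodMk continuousOn_id) fun t ht => ⟨mem_univ _, ht⟩
  obtain ⟨hR0, hRfix⟩ := smallerRoot_nonneg_and_fixed (a := K * N) (D := D) (R := R)
    (mul_pos hK hN) hE (by rwa [mul_assoc 2 K N] at hcond)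
    (by rwa [mul_assoc 2 K N, mul_assoc 4 K N] at hR)
  exact exists_fixedPoint_picardMap hk hμm_N hK.le hPP
    (continuousOn_Ici_of_lipschitzOn_isCompact hξ) hu hB hφap_cont hD hE hDb
    (fun t ht => by simpa [picardMap, duhamel, sub_sub] using hEb t ht) hR0 hRfix

/-- Global existence with exponential decay: if an approximate solution `φ_ap` of `VP(f₀)`
satisfies `‖E(φ_ap)(t)‖ ≤ E e^{−Bt}`, `‖φ_ap(t)‖ ≤ D e^{−Bt}` and `2√(KNE) + 2KND ≤ 1`,
then `VP(f₀)` has a global solution `φ` with `‖φ(t) − φ_ap(t)‖ ≤ R e^{−Bt}`. -/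
theorem stmt_7
    {F Fm : Type*}
    [NormedAddCommGroup F] [NormedSpace ℝ F] [CompleteSpace F]
    [NormedAddCommGroup Fm] [NormedSpace ℝ Fm] [CompleteSpace Fm]
    -- F is a dense subspace of Fm, with continuous inclusion ι
    (ι : F →L[ℝ] Fm) (hι_inj : Function.Injective ι) (hι_dense : DenseRange ι)
    -- the semigroup (e^{tA})_{t ≥ 0} on Fm, strongly continuous
    (U : ℝ → Fm →L[ℝ] Fm)
    (hU0 : U 0 = ContinuousLinearMap.id ℝ Fm)
    (hUsem : ∀ s ≥ (0:ℝ), ∀ t ≥ (0:ℝ), U (s + t) = (U s).comp (U t))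
    (hUsc : ∀ f : Fm, ContinuousOn (fun t => U t f) (Ici (0:ℝ)))
    -- e^{tA} maps F into F (lift V), giving a strongly continuous semigroup on F
    (V : ℝ → F → F)
    (hV : ∀ t ≥ (0:ℝ), ∀ x : F, ι (V t x) = U t (ι x))
    (hVcont : ContinuousOn (fun p : F × ℝ => V p.2 p.1) (univ ×ˢ Ici (0:ℝ)))
    -- e^{tA} maps Fm into F for t > 0 (lift W), continuously on Fm × (0,∞)
    (W : ℝ → Fm → F)
    (hW : ∀ t > (0:ℝ), ∀ f : Fm, ι (W t f) = U t f)
    (hWcont : ContinuousOn (fun p : Fm × ℝ => W p.2 p.1) (univ ×ˢ Ioi (0:ℝ)))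
    -- the continuous bilinear map 𝒫 with constant K, and the forcing ξ
    (PP : F →L[ℝ] F →L[ℝ] Fm) (K : ℝ) (hK : 0 < K)
    (hPP : ∀ f g : F, ‖PP f g‖ ≤ K * ‖f‖ * ‖g‖)
    (ξ : ℝ → Fm)
    (hξ : ∀ C : Set ℝ, IsCompact C → C ⊆ Ici (0:ℝ) →
      ∃ M : ℝ, ∀ t ∈ C, ∀ t' ∈ C, ‖ξ t - ξ t'‖ ≤ M * |t - t'|)
    -- constants B, N and the exponential semigroup estimators (P4'), (P5')
    (B N : ℝ) (hB : 0 ≤ B) (hN : 0 < N)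
    (hu_bd : ∀ t ≥ (0:ℝ), ∀ x : F, ‖V t x‖ ≤ Real.exp (-(B * t)) * ‖x‖)
    (μm : ℝ → ℝ)
    (hμm_cont : ContinuousOn μm (Ioi (0:ℝ)))
    (hμm_pos : ∀ t > (0:ℝ), 0 < μm t)
    (hμm_bd : ∀ t > (0:ℝ), ∀ f : Fm, ‖W t f‖ ≤ μm t * Real.exp (-(B * t)) * ‖f‖)
    (σ : ℝ) (hσ : σ ∈ Ioc (0:ℝ) 1)
    (hμm_O : ∃ C : ℝ, ∃ δ > (0:ℝ), ∀ t ∈ Ioo (0:ℝ) δ, μm t ≤ C / t ^ (1 - σ))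
    (hμm_N : ∀ t ≥ (0:ℝ), (∫ s in (0:ℝ)..t, μm (t - s) * Real.exp (-(B * s))) ≤ N)
    -- datum and approximate solution on [0,∞)
    (f₀ : F) (φap : ℝ → F) (hφap_cont : ContinuousOn φap (Ici (0:ℝ)))
    (E D : ℝ) (hE : 0 ≤ E) (hD : 0 ≤ D)
    (hEb : ∀ t ≥ (0:ℝ),
      ‖φap t - V t f₀ - ∫ s in (0:ℝ)..t, W (t - s) (PP (φap s) (φap s) + ξ s)‖ ≤
        E * Real.exp (-(B * t)))
    (hDb : ∀ t ≥ (0:ℝ), ‖φap t‖ ≤ D * Real.exp (-(B * t)))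
    (hcond : 2 * Real.sqrt (K * N * E) + 2 * K * N * D ≤ 1)
    (R : ℝ)
    (hR : R = (1 - 2 * K * N * D -
      Real.sqrt ((1 - 2 * K * N * D) ^ 2 - 4 * K * N * E)) / (2 * K * N)) :
    ∃ φ : ℝ → F, ContinuousOn φ (Ici (0:ℝ)) ∧
      (∀ t ≥ (0:ℝ), φ t = V t f₀ + ∫ s in (0:ℝ)..t, W (t - s) (PP (φ s) (φ s) + ξ s)) ∧
      ∀ t ≥ (0:ℝ), ‖φ t - φap t‖ ≤ R * Real.exp (-(B * t)) :=
  stmt_7_general ι hι_inj U V hVcont W hW hWcont PP K hK hPP ξ hξ B N hB hN μm hμm_cont hμm_pos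
    hμm_bd σ hσ hμm_O hμm_N f₀ φap hφap_cont E D hE hD hEb hDb hcond R hR
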